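/- Let Z be a multiaffine real polynomial with positive coefficients such that for every triple of distinct indices e,f,g and every real assignment of the other variables, the discriminant of ΔZ{e,f} with respect to y_g is nonpositive. If in addition ΔZ{e,f} ≥ 0 everywhere on ℝ^m for one fixed pair {e,f}, and the leading and constant coefficients ΔZ_g{e,g'} and ΔZ^g{e,g'} are nonnegative for all relevant pairs by induction, then ΔZ{e,g} ≥ 0 everywhere for every g ≠ e. (Propagation step of Theorem 3.) -/

import Mathlib

open MvPolynomial

/-- The deletion `Z^e`: the polynomial `Z` with `y_e` set to `0`. -/
noncomputable def del {m : ℕ} (e : Fin m) (Z : MvPolynomial (Fin m) ℝ) : MvPolynomial (Fin m) ℝ :=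
  aeval (fun i => if i = e then (0 : MvPolynomial (Fin m) ℝ) else X i) Z

/-- Multiaffine: every variable occurs to at most the first power. -/
def Multiaffine {m : ℕ} (Z : MvPolynomial (Fin m) ℝ) : Prop :=
  ∀ e : Fin m, Z.degreeOf e ≤ 1

/-- The Rayleigh difference `ΔZ{e,f} = Z_e Z_f - Z_{ef} Z`. -/
noncomputable def Ray {m : ℕ} (e f : Fin m) (Z : MvPolynomial (Fin m) ℝ) : MvPolynomial (Fin m) ℝ :=
  pderiv e Z * pderiv f Z - pderiv f (pderiv e Z) * Z

/-- The discriminant `B² - 4AC` of `ΔZ{e,f}` regarded as a quadratic in `y_g`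
(for `Z` multiaffine). -/
noncomputable def disc {m : ℕ} (Z : MvPolynomial (Fin m) ℝ) (e f g : Fin m) :
    MvPolynomial (Fin m) ℝ :=
  (del f (del g (pderiv e Z)) * del e (pderiv f (pderiv g Z))
    + del e (del g (pderiv f Z)) * del f (pderiv e (pderiv g Z))
    - del e (del f (pderiv g Z)) * del g (pderiv e (pderiv f Z))
    - pderiv e (pderiv f (pderiv g Z)) * del e (del f (del g Z))) ^ 2
  - 4 * Ray e f (pderiv g Z) * Ray e f (del g Z)

/-!
`ΔZ{e,g}` does not involve `y_e` or `y_g`: it is affine in each of them and its partial derivatives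
in them vanish, so it may be evaluated with `y_e = y_g = 0`. As a function of `y_f` it is then a
quadratic whose extreme coefficients `ΔZ_f{e,g}` and `ΔZ^f{e,g}` are nonnegative by hypothesis and
whose discriminant, once `y_f = 0` as well, is the value of `disc Z e g f`, nonpositive by
hypothesis.
-/

theorem quadratic_nonneg_of_discrim_nonpos {K : Type*} [Field K] [LinearOrder K]
    [IsStrictOrderedRing K] {a b c : K} (ha : 0 ≤ a) (hc : 0 ≤ c) (h : discrim a b c ≤ 0)
    (x : K) : 0 ≤ a * (x * x) + b * x + c := by
  rw [discrim] at h
  rcases ha.eq_or_lt with rfl | ha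
  · have hb : b = 0 := by nlinarith [sq_nonneg b]
    simpa [hb] using hc
  · nlinarith [sq_nonneg (2 * a * x + b)]

namespace MvPolynomial

variable {σ R : Type*} [CommSemiring R]

theorem pderiv_pderiv_comm (i j : σ) (p : MvPolynomial σ R) :
    pderiv i (pderiv j p) = pderiv j (pderiv i p) := by
  induction p using MvPolynomial.induction_on with
  | C a => simp
  | add p q hp hq => simp [hp, hq]
  | mul_X p n ih =>
    have expand : ∀ k l : σ, pderiv k (pderiv l (p * X n))
        = pderiv k (pderiv l p) * X n + pderiv l p * pderiv k (X n)
          + pderiv k p * pderiv l (X n) := by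
      intro k l
      rw [pderiv_mul, map_add, pderiv_mul]
      congr 1
      by_cases hnl : n = l
      · subst hnl; rw [pderiv_X_self, mul_one, mul_one]
      · rw [pderiv_X_of_ne hnl, mul_zero, mul_zero, map_zero]
    rw [expand, expand, ih]
    ring

theorem degreeOf_pderiv_le (i j : σ) (p : MvPolynomial σ R) :
    degreeOf i (pderiv j p) ≤ degreeOf i p := by
  classical
  refine degreeOf_le_iff.mpr fun d hd => ?_
  rw [mem_support_iff, coeff_pderiv] at hd
  have hmem : d + Finsupp.single j 1 ∈ p.support := mem_support_iff.mpr (left_ne_zero_of_mul hd)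
  exact le_trans (by simp) (monomial_le_degreeOf i hmem)

theorem degreeOf_pderiv_self_le (i : σ) (p : MvPolynomial σ R) :
    degreeOf i (pderiv i p) ≤ degreeOf i p - 1 := by
  classical
  refine degreeOf_le_iff.mpr fun d hd => ?_
  rw [mem_support_iff, coeff_pderiv] at hd
  have hmem : d + Finsupp.single i 1 ∈ p.support := mem_support_iff.mpr (left_ne_zero_of_mul hd)
  have := monomial_le_degreeOf i hmem
  simp only [Finsupp.add_apply, Finsupp.single_eq_same] at this
  omega

theorem pderiv_eq_zero_of_degreeOf_eq_zero {i : σ} {p : MvPolynomial σ R}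
    (h : degreeOf i p = 0) : pderiv i p = 0 := by
  classical
  ext d
  rw [coeff_pderiv, coeff_zero]
  by_contra hd
  have hmem : d + Finsupp.single i 1 ∈ p.support := mem_support_iff.mpr (left_ne_zero_of_mul hd)
  have := degreeOf_le_iff.mp h.le _ hmem
  simp at this

end MvPolynomial

section Multiaffine

variable {m : ℕ} {Z : MvPolynomial (Fin m) ℝ}

theorem degreeOf_pderiv_self_eq_zero (hZ : Multiaffine Z) (i : Fin m) :
    degreeOf i (pderiv i Z) = 0 := by
  have := degreeOf_pderiv_self_le i Z; have := hZ i; omega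

theorem Multiaffine.pderiv (hZ : Multiaffine Z) (j : Fin m) : Multiaffine (pderiv j Z) :=
  fun i => (degreeOf_pderiv_le i j Z).trans (hZ i)

theorem eval_del (i : Fin m) (P : MvPolynomial (Fin m) ℝ) (y : Fin m → ℝ) :
    eval y (del i P) = eval (Function.update y i 0) P := by
  rw [del, aeval_def, eval_eval₂]
  have hC : (eval y).comp (algebraMap ℝ (MvPolynomial (Fin m) ℝ)) = RingHom.id ℝ := by
    ext r; simp
  have hX : (fun j => eval y (if j = i then 0 else X j)) = Function.update y i 0 := by
    funext j
    by_cases h : j = i <;> simp [h]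
  rw [hC, eval₂_id, hX]

theorem eval_del_of_eq_zero {i : Fin m} {y : Fin m → ℝ} (hy : y i = 0)
    (P : MvPolynomial (Fin m) ℝ) : eval y (del i P) = eval y P := by
  rw [eval_del, ← hy, Function.update_eq_self]

theorem del_monomial (i : Fin m) (d : Fin m →₀ ℕ) (c : ℝ) :
    del i (monomial d c) = if d i = 0 then monomial d c else 0 := by
  rw [del, aeval_monomial]
  split_ifs with h
  · rw [monomial_eq, Finsupp.prod, Finsupp.prod]
    congr 1
    refine Finset.prod_congr rfl fun j hj => ?_
    have hji : j ≠ i := by rintro rfl; exact Finsupp.mem_support_iff.mp hj h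
    simp [hji]
  · rw [Finsupp.prod, Finset.prod_eq_zero (Finsupp.mem_support_iff.mpr h) (by simp [zero_pow h]),
      mul_zero]

theorem X_mul_pderiv_add_del {i : Fin m} {P : MvPolynomial (Fin m) ℝ} (h : degreeOf i P ≤ 1) :
    X i * pderiv i P + del i P = P := by
  conv_lhs => rw [P.as_sum]
  rw [map_sum, Finset.mul_sum, del, map_sum, ← Finset.sum_add_distrib]
  conv_rhs => rw [P.as_sum]
  refine Finset.sum_congr rfl fun d hd => ?_
  rw [← del]
  have hdi : d i ≤ 1 := degreeOf_le_iff.mp h d hd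
  rw [pderiv_monomial, del_monomial]
  interval_cases hdi' : d i
  · simp
  · have hle : Finsupp.single i 1 ≤ d := by rw [Finsupp.single_le_iff]; omega
    rw [if_neg one_ne_zero, X, monomial_mul, add_tsub_cancel_of_le hle]
    simp

theorem pderiv_del {i j : Fin m} (hij : i ≠ j) (P : MvPolynomial (Fin m) ℝ) :
    pderiv i (del j P) = del j (pderiv i P) := by
  induction P using MvPolynomial.induction_on with
  | C a => simp [del]
  | add p q hp hq => simp only [del, map_add] at *; rw [hp, hq]
  | mul_X p n ih =>
    simp only [del, map_mul, map_add, pderiv_mul, aeval_X] at *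
    rw [ih]
    by_cases hnj : n = j
    · subst hnj; simp [pderiv_X_of_ne hij.symm]
    · by_cases hni : n = i
      · subst hni; simp [hnj]
      · simp [hnj, pderiv_X_of_ne hni]

theorem eval_update_eq_of_pderiv_eq_zero {i : Fin m} {P : MvPolynomial (Fin m) ℝ}
    (h : degreeOf i P ≤ 1) (h' : pderiv i P = 0) (y : Fin m → ℝ) (t : ℝ) :
    eval (Function.update y i t) P = eval y P := by
  have hP : del i P = P := by simpa [h'] using X_mul_pderiv_add_del h
  rw [← hP, eval_del, eval_del, Function.update_idem]

theorem eval_update_of_degreeOf_le_one {i : Fin m} {P : MvPolynomial (Fin m) ℝ}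
    (h : degreeOf i P ≤ 1) {y : Fin m → ℝ} (hy : y i = 0) (t : ℝ) :
    eval (Function.update y i t) P = t * eval y (pderiv i P) + eval y P := by
  have hPi : degreeOf i (pderiv i P) = 0 := by
    have := degreeOf_pderiv_self_le i P; omega
  conv_lhs => rw [← X_mul_pderiv_add_del h]
  rw [map_add, map_mul, eval_X, Function.update_self, eval_del, Function.update_idem,
    eval_update_eq_of_pderiv_eq_zero (by omega) (pderiv_eq_zero_of_degreeOf_eq_zero hPi),
    ← hy, Function.update_eq_self]

theorem ray_comm (e g : Fin m) : Ray e g Z = Ray g e Z := by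
  rw [Ray, Ray, pderiv_pderiv_comm, mul_comm]

theorem pderiv_ray_left (hZ : Multiaffine Z) (e g : Fin m) : pderiv e (Ray e g Z) = 0 := by
  have hee := pderiv_eq_zero_of_degreeOf_eq_zero (degreeOf_pderiv_self_eq_zero hZ e)
  rw [Ray, map_sub, pderiv_mul, pderiv_mul, hee, pderiv_pderiv_comm e g (pderiv e Z), hee,
    map_zero, pderiv_pderiv_comm e g Z]
  ring

theorem degreeOf_ray_left_le (hZ : Multiaffine Z) (e g : Fin m) : degreeOf e (Ray e g Z) ≤ 1 := by
  have he : degreeOf e (pderiv e Z) = 0 := degreeOf_pderiv_self_eq_zero hZ e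
  have hge : degreeOf e (pderiv g (pderiv e Z)) = 0 :=
    Nat.le_zero.mp (he ▸ degreeOf_pderiv_le e g (pderiv e Z))
  refine (degreeOf_sub_le e _ _).trans (max_le ?_ ?_)
  · exact (degreeOf_mul_le _ _ _).trans (by rw [he, zero_add]; exact hZ.pderiv g e)
  · exact (degreeOf_mul_le _ _ _).trans (by rw [hge, zero_add]; exact hZ e)

theorem eval_ray_update_left (hZ : Multiaffine Z) (e g : Fin m) (y : Fin m → ℝ) (t : ℝ) :
    eval (Function.update y e t) (Ray e g Z) = eval y (Ray e g Z) :=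
  eval_update_eq_of_pderiv_eq_zero (degreeOf_ray_left_le hZ e g) (pderiv_ray_left hZ e g) y t

theorem eval_ray_update_right (hZ : Multiaffine Z) (e g : Fin m) (y : Fin m → ℝ) (t : ℝ) :
    eval (Function.update y g t) (Ray e g Z) = eval y (Ray e g Z) := by
  rw [ray_comm, eval_ray_update_left hZ]

theorem eval_ray_update_eq_quadratic (hZ : Multiaffine Z) {e g f : Fin m} (hef : e ≠ f)
    (hgf : g ≠ f) {y : Fin m → ℝ} (hye : y e = 0) (hyg : y g = 0) (hyf : y f = 0) :
    ∃ b : ℝ, (∀ t : ℝ, eval (Function.update y f t) (Ray e g Z)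
        = eval y (Ray e g (pderiv f Z)) * (t * t) + b * t + eval y (Ray e g (del f Z))) ∧
      discrim (eval y (Ray e g (pderiv f Z))) b (eval y (Ray e g (del f Z)))
        = eval y (disc Z e g f) := by
  refine ⟨eval y (pderiv f (pderiv e Z)) * eval y (pderiv g Z)
    + eval y (pderiv e Z) * eval y (pderiv f (pderiv g Z))
    - eval y (pderiv f (pderiv g (pderiv e Z))) * eval y Z
    - eval y (pderiv g (pderiv e Z)) * eval y (pderiv f Z), fun t => ?_, ?_⟩
  · simp only [Ray, map_sub, map_mul, eval_update_of_degreeOf_le_one (hZ f) hyf,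
      eval_update_of_degreeOf_le_one (hZ.pderiv e f) hyf,
      eval_update_of_degreeOf_le_one (hZ.pderiv g f) hyf,
      eval_update_of_degreeOf_le_one ((hZ.pderiv e).pderiv g f) hyf,
      pderiv_del hef, pderiv_del hgf, eval_del_of_eq_zero hyf]
    rw [pderiv_pderiv_comm e f Z, pderiv_pderiv_comm g f Z, pderiv_pderiv_comm g f (pderiv e Z)]
    ring
  · simp only [disc, discrim, Ray, map_sub, map_mul, map_add, map_pow, map_ofNat,
      eval_del_of_eq_zero hye, eval_del_of_eq_zero hyg, eval_del_of_eq_zero hyf,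
      pderiv_del hef, pderiv_del hgf]
    rw [pderiv_pderiv_comm e f Z, pderiv_pderiv_comm g f Z, pderiv_pderiv_comm g f (pderiv e Z),
      pderiv_pderiv_comm e f (pderiv g Z), pderiv_pderiv_comm e g Z]
    ring

end Multiaffine

theorem propagation_step_general {m : ℕ} (Z : MvPolynomial (Fin m) ℝ)
    (hZ : Multiaffine Z)
    (hdisc : ∀ e' f' g' : Fin m, e' ≠ f' → e' ≠ g' → f' ≠ g' →
      ∀ y : Fin m → ℝ, eval y (disc Z e' f' g') ≤ 0)
    (e f : Fin m) (hef : e ≠ f)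
    (hΔef : ∀ y : Fin m → ℝ, 0 ≤ eval y (Ray e f Z))
    (hcoeffs : ∀ g g' : Fin m, g ≠ e → g' ≠ e → g ≠ g' →
      (∀ y : Fin m → ℝ, 0 ≤ eval y (Ray e g' (pderiv g Z))) ∧
      (∀ y : Fin m → ℝ, 0 ≤ eval y (Ray e g' (del g Z)))) :
    ∀ g : Fin m, g ≠ e → ∀ y : Fin m → ℝ, 0 ≤ eval y (Ray e g Z) := by
  intro g hge y
  rcases eq_or_ne g f with rfl | hgf
  · exact hΔef y
  obtain ⟨w, hwe, hwg, hwf, hyw⟩ : ∃ w : Fin m → ℝ, w e = 0 ∧ w g = 0 ∧ w f = 0 ∧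
      eval y (Ray e g Z) = eval (Function.update w f (y f)) (Ray e g Z) := by
    refine ⟨Function.update (Function.update (Function.update y e 0) g 0) f 0,
      by simp [hef, hge.symm], by simp [hgf], by simp, ?_⟩
    rw [Function.update_idem, ← Function.update_comm hgf.symm, ← Function.update_comm hef.symm,
      Function.update_eq_self, eval_ray_update_right hZ, eval_ray_update_left hZ]
  obtain ⟨b, hquad, hdiscrim⟩ := eval_ray_update_eq_quadratic hZ hef hgf hwe hwg hwf
  obtain ⟨hlead, hconst⟩ := hcoeffs f g hef.symm hge hgf.symm
  rw [hyw, hquad]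
  exact quadratic_nonneg_of_discrim_nonpos (hlead w) (hconst w)
    (hdiscrim.trans_le (hdisc e g f hge.symm hef hgf w)) (y f)

theorem propagation_step {m : ℕ} (Z : MvPolynomial (Fin m) ℝ)
    (hZ : Multiaffine Z)
    (hpos : ∀ d, Z.coeff d ≠ 0 → 0 < Z.coeff d)
    (hdisc : ∀ e' f' g' : Fin m, e' ≠ f' → e' ≠ g' → f' ≠ g' →
      ∀ y : Fin m → ℝ, eval y (disc Z e' f' g') ≤ 0)
    (e f : Fin m) (hef : e ≠ f)
    (hΔef : ∀ y : Fin m → ℝ, 0 ≤ eval y (Ray e f Z))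
    (hcoeffs : ∀ g g' : Fin m, g ≠ e → g' ≠ e → g ≠ g' →
      (∀ y : Fin m → ℝ, 0 ≤ eval y (Ray e g' (pderiv g Z))) ∧
      (∀ y : Fin m → ℝ, 0 ≤ eval y (Ray e g' (del g Z)))) :
    ∀ g : Fin m, g ≠ e → ∀ y : Fin m → ℝ, 0 ≤ eval y (Ray e g Z) :=
  propagation_step_general Z hZ hdisc e f hef hΔef hcoeffs
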